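/- arXiv:1803.01918 — 4 statements merged into one kernel-verified Lean document; each statement's English description precedes it below -/
import Mathlib

section
/- Let E be a finite set of network elements with conductances G : E → ℝ, G_e > 0, and voltage drops d : E → ℂ. Let K be a finite set of loads; for each k ∈ K let v_k ∈ ℂ be the load-bus voltage, y_k ∈ ℂ the load admittance, Y^max_k ≥ 0 with |y_k| ≤ Y^max_k, and φ ∈ ℝ an augmentation angle. Suppose each load k is assigned a nonempty path Π_k ⊆ E, the Π_k are pairwise disjoint, and each path ends at a ground/source node so that Σ_{e∈Π_k} d_e = v_k. Define G_{Π_k} = (Σ_{e∈Π_k} 1/G_e)⁻¹ and assume G_{Π_k} > Y^max_k for every k ∈ K. Then Σ_{e∈E} G_e|d_e|² + Σ_{k∈K} Re(e^{iφ} y_k)|v_k|² ≥ Σ_{k∈K} (G_{Π_k} − Y^max_k)|v_k|², and this total Augmented Power Dissipation is strictly positive whenever v_k ≠ 0 for some k ∈ K. -/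
/-!
Along a path the voltage drops add up to the load voltage, so by the triangle inequality and the
weighted Cauchy–Schwarz inequality `(∑ |d_e|)² / ∑ 1/G_e ≤ ∑ G_e |d_e|²` the dissipation on the
path dominates `G_Π |v_k|²`; disjointness of the paths lets these bounds be summed. A rotation
`e^{iφ}` does not change `|y_k|`, so each load contributes at least `-Y^max_k |v_k|²`.
-/

open Finset

theorem inv_sum_inv_mul_norm_sum_sq_le {ι F : Type*} [SeminormedAddCommGroup F]
    (s : Finset ι) {G : ι → ℝ} (hG : ∀ i ∈ s, 0 < G i) (d : ι → F) :
    (∑ i ∈ s, (G i)⁻¹)⁻¹ * ‖∑ i ∈ s, d i‖ ^ 2 ≤ ∑ i ∈ s, G i * ‖d i‖ ^ 2 :=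
  calc (∑ i ∈ s, (G i)⁻¹)⁻¹ * ‖∑ i ∈ s, d i‖ ^ 2
      ≤ (∑ i ∈ s, (G i)⁻¹)⁻¹ * (∑ i ∈ s, ‖d i‖) ^ 2 := by
        have hG' : 0 ≤ (∑ i ∈ s, (G i)⁻¹)⁻¹ :=
          inv_nonneg.mpr (sum_nonneg fun i hi => (inv_pos.mpr (hG i hi)).le)
        gcongr
        exact norm_sum_le s d
    _ = (∑ i ∈ s, ‖d i‖) ^ 2 / ∑ i ∈ s, (G i)⁻¹ := inv_mul_eq_div _ _
    _ ≤ ∑ i ∈ s, ‖d i‖ ^ 2 / (G i)⁻¹ :=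
        sq_sum_div_le_sum_sq_div s _ fun i hi => inv_pos.mpr (hG i hi)
    _ = ∑ i ∈ s, G i * ‖d i‖ ^ 2 := by
        simp only [div_inv_eq_mul, mul_comm]

theorem sum_sum_le_sum_of_pairwise_disjoint {ι κ M : Type*} [Fintype ι] [Fintype κ]
    [AddCommMonoid M] [PartialOrder M] [IsOrderedAddMonoid M]
    {P : κ → Finset ι} (hP : ∀ k k', k ≠ k' → Disjoint (P k) (P k'))
    {f : ι → M} (hf : ∀ i, 0 ≤ f i) :
    ∑ k, ∑ i ∈ P k, f i ≤ ∑ i, f i := by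
  classical
  rw [← sum_biUnion fun k _ k' _ hkk' => hP k k' hkk']
  exact sum_le_univ_sum_of_nonneg hf

theorem neg_norm_le_re_exp_mul_I_mul (φ : ℝ) (y : ℂ) :
    -‖y‖ ≤ (Complex.exp (φ * Complex.I) * y).re := by
  have h := Complex.abs_re_le_norm (Complex.exp (φ * Complex.I) * y)
  rw [norm_mul, Complex.norm_exp_ofReal_mul_I, one_mul] at h
  exact (abs_le.mp h).1

theorem stmt_4_general {E K : Type*} [Fintype E] [Fintype K]
    (G : E → ℝ) (hG : ∀ e, 0 < G e) (d : E → ℂ)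
    (v y : K → ℂ) (Ymax : K → ℝ) (φ : ℝ)
    (hy : ∀ k, ‖y k‖ ≤ Ymax k)
    (P : K → Finset E)
    (hdisj : ∀ k k', k ≠ k' → Disjoint (P k) (P k'))
    (hend : ∀ k, ∑ e ∈ P k, d e = v k)
    (hGP : ∀ k, (∑ e ∈ P k, (G e)⁻¹)⁻¹ > Ymax k) :
    (∑ e, G e * ‖d e‖ ^ 2
        + ∑ k, (Complex.exp (φ * Complex.I) * y k).re * ‖v k‖ ^ 2 ≥
      ∑ k, ((∑ e ∈ P k, (G e)⁻¹)⁻¹ - Ymax k) * ‖v k‖ ^ 2) ∧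
    ((∃ k, v k ≠ 0) →
      0 < ∑ e, G e * ‖d e‖ ^ 2
        + ∑ k, (Complex.exp (φ * Complex.I) * y k).re * ‖v k‖ ^ 2) := by
  have hpaths : ∑ k, (∑ e ∈ P k, (G e)⁻¹)⁻¹ * ‖v k‖ ^ 2 ≤ ∑ e, G e * ‖d e‖ ^ 2 :=
    calc ∑ k, (∑ e ∈ P k, (G e)⁻¹)⁻¹ * ‖v k‖ ^ 2
        ≤ ∑ k, ∑ e ∈ P k, G e * ‖d e‖ ^ 2 := sum_le_sum fun k _ => by
          rw [← hend k]
          exact inv_sum_inv_mul_norm_sum_sq_le (P k) (fun e _ => hG e) d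
      _ ≤ ∑ e, G e * ‖d e‖ ^ 2 :=
          sum_sum_le_sum_of_pairwise_disjoint hdisj fun e => by have := hG e; positivity
  have hloads : ∑ k, -Ymax k * ‖v k‖ ^ 2
      ≤ ∑ k, (Complex.exp (φ * Complex.I) * y k).re * ‖v k‖ ^ 2 :=
    sum_le_sum fun k _ => by
      gcongr
      exact (neg_le_neg (hy k)).trans (neg_norm_le_re_exp_mul_I_mul φ (y k))
  have hlower : ∑ k, ((∑ e ∈ P k, (G e)⁻¹)⁻¹ - Ymax k) * ‖v k‖ ^ 2
      ≤ ∑ e, G e * ‖d e‖ ^ 2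
        + ∑ k, (Complex.exp (φ * Complex.I) * y k).re * ‖v k‖ ^ 2 :=
    calc ∑ k, ((∑ e ∈ P k, (G e)⁻¹)⁻¹ - Ymax k) * ‖v k‖ ^ 2
        = ∑ k, ((∑ e ∈ P k, (G e)⁻¹)⁻¹ * ‖v k‖ ^ 2 + -Ymax k * ‖v k‖ ^ 2) :=
          sum_congr rfl fun k _ => by ring
      _ = _ := sum_add_distrib
      _ ≤ _ := add_le_add hpaths hloads
  refine ⟨hlower, fun ⟨k₀, hk₀⟩ => hlower.trans_lt' ?_⟩
  exact sum_pos' (fun k _ => mul_nonneg (sub_nonneg.mpr (hGP k).le) (sq_nonneg _))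
    ⟨k₀, mem_univ _, mul_pos (sub_pos.mpr (hGP k₀)) (by positivity)⟩

/-- Main stability theorem: with a load path decomposition in which every path ends at
ground/source (`Σ_{e∈Π_k} d_e = v_k`) and `G_{Π_k} > Y^max_k` for all loads, the total
Augmented Power Dissipation is bounded below by `Σ_k (G_{Π_k} − Y^max_k)|v_k|²` and is
strictly positive whenever some load-bus voltage is nonzero. -/
theorem stmt_4 {E K : Type*} [Fintype E] [Fintype K]
    (G : E → ℝ) (hG : ∀ e, 0 < G e) (d : E → ℂ)
    (v y : K → ℂ) (Ymax : K → ℝ) (φ : ℝ)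
    (hYmax : ∀ k, 0 ≤ Ymax k) (hy : ∀ k, ‖y k‖ ≤ Ymax k)
    (P : K → Finset E) (hne : ∀ k, (P k).Nonempty)
    (hdisj : ∀ k k', k ≠ k' → Disjoint (P k) (P k'))
    (hend : ∀ k, ∑ e ∈ P k, d e = v k)
    (hGP : ∀ k, (∑ e ∈ P k, (G e)⁻¹)⁻¹ > Ymax k) :
    (∑ e, G e * ‖d e‖ ^ 2
        + ∑ k, (Complex.exp (φ * Complex.I) * y k).re * ‖v k‖ ^ 2 ≥
      ∑ k, ((∑ e ∈ P k, (G e)⁻¹)⁻¹ - Ymax k) * ‖v k‖ ^ 2) ∧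
    ((∃ k, v k ≠ 0) →
      0 < ∑ e, G e * ‖d e‖ ^ 2
        + ∑ k, (Complex.exp (φ * Complex.I) * y k).re * ‖v k‖ ^ 2) :=
  stmt_4_general G hG d v y Ymax φ hy P hdisj hend hGP
end

section
/- Let r > 0, L ≥ 0, ω > 0, τ > 0 be real numbers with L ≤ r·τ, and set φ = −arctan(1/(ωτ)). Then Re( e^{iφ} / (r + iωL) ) ≥ 0, i.e., the resistive-inductive element remains augmented-dissipative under the rotation by the maximal negative augmentation angle −arctan((ωτ)⁻¹). -/
/-!
Writing `z = r + iωL`, the real part of `e^{iφ} / z` is `(r cos φ + ωL sin φ) / |z|²`.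
For `φ = -arctan a` the numerator is `(r - ωL a) / √(1 + a²)`, and with `a = 1/(ωτ)` the condition
`ωL a ≤ r` is exactly the time-constant bound `L ≤ rτ`.
-/

open Complex

theorem Complex.re_exp_ofReal_mul_I_div (φ : ℝ) (z : ℂ) :
    (exp (φ * I) / z).re = (z.re * Real.cos φ + z.im * Real.sin φ) / normSq z := by
  rw [div_re, exp_ofReal_mul_I_re, exp_ofReal_mul_I_im, ← add_div]
  ring

theorem Real.mul_cos_neg_arctan_add_mul_sin_neg_arctan (r x a : ℝ) :
    r * Real.cos (-Real.arctan a) + x * Real.sin (-Real.arctan a)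
      = (r - x * a) / Real.sqrt (1 + a ^ 2) := by
  rw [Real.cos_neg, Real.sin_neg, Real.cos_arctan, Real.sin_arctan]
  ring

theorem stmt_11_general (r L ω τ : ℝ) (hω : 0 < ω) (hτ : 0 < τ)
    (hLrτ : L ≤ r * τ) :
    0 ≤ (Complex.exp ((-Real.arctan (1 / (ω * τ)) : ℝ) * Complex.I) /
        ((r : ℂ) + (ω : ℂ) * (L : ℂ) * Complex.I)).re := by
  have hz : ((r : ℂ) + (ω : ℂ) * (L : ℂ) * I) = ⟨r, ω * L⟩ := by
    apply Complex.ext <;> simp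
  have time_constant : ω * L * (1 / (ω * τ)) ≤ r := by
    rw [mul_one_div, mul_div_mul_left _ _ hω.ne', div_le_iff₀ hτ]
    exact hLrτ
  rw [hz, re_exp_ofReal_mul_I_div, Real.mul_cos_neg_arctan_add_mul_sin_neg_arctan]
  exact div_nonneg (div_nonneg (sub_nonneg.2 time_constant) (Real.sqrt_nonneg _))
    (normSq_nonneg _)

/-- A resistive-inductive element with time constant `L/r ≤ τ` remains
augmented-dissipative under the maximal negative augmentation angle
`φ = −arctan((ωτ)⁻¹)`: its Augmented Conductance is nonnegative. -/
theorem stmt_11 (r L ω τ : ℝ) (hr : 0 < r) (hL : 0 ≤ L) (hω : 0 < ω) (hτ : 0 < τ)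
    (hLrτ : L ≤ r * τ) :
    0 ≤ (Complex.exp ((-Real.arctan (1 / (ω * τ)) : ℝ) * Complex.I) /
        ((r : ℂ) + (ω : ℂ) * (L : ℂ) * Complex.I)).re :=
  stmt_11_general r L ω τ hω hτ hLrτ
end

section
/- Let R > 0, τ > 0, C > 0, and Y_max > 0 be real numbers with R·Y_max < 1 and C > Y_max·τ. Define Ω_L = (1/τ)·√(1/(R·Y_max) − 1) and Ω_C = Y_max/√(C² − (Y_max·τ)²). Then the following are equivalent: (i) Ω_C < Ω_L; (ii) C > Y_max·τ/√(1 − R·Y_max); (iii) R < (C² − (Y_max·τ)²)/(Y_max·C²). -/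
/-- Equivalence of the band-overlap condition `Ω_C < Ω_L` with the capacitance lower
bound `C > Y_max τ/√(1 − R Y_max)` and with the resistance upper bound
`R < (C² − (Y_max τ)²)/(Y_max C²)`. -/
theorem stmt_14 (R τ C Ymax : ℝ) (hR : 0 < R) (hτ : 0 < τ) (hC : 0 < C)
    (hY : 0 < Ymax) (hRY : R * Ymax < 1) (hCY : C > Ymax * τ)
    (ΩL ΩC : ℝ) (hΩL : ΩL = (1 / τ) * Real.sqrt (1 / (R * Ymax) - 1))
    (hΩC : ΩC = Ymax / Real.sqrt (C ^ 2 - (Ymax * τ) ^ 2)) :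
    (ΩC < ΩL ↔ C > Ymax * τ / Real.sqrt (1 - R * Ymax)) ∧
    (C > Ymax * τ / Real.sqrt (1 - R * Ymax) ↔
      R < (C ^ 2 - (Ymax * τ) ^ 2) / (Ymax * C ^ 2)) := by
  have hYτ : 0 < Ymax * τ := mul_pos hY hτ
  have hs : 0 < 1 - R * Ymax := by linarith
  have hD : 0 < C ^ 2 - (Ymax * τ) ^ 2 := by nlinarith
  have hRY0 : 0 < R * Ymax := mul_pos hR hY
  have hu : 0 ≤ 1 / (R * Ymax) - 1 := by
    rw [sub_nonneg, le_div_iff₀ hRY0]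
    linarith
  have key1 : (ΩC < ΩL ↔ (Ymax * τ) ^ 2 < (1 - R * Ymax) * C ^ 2) := by
    rw [hΩC, hΩL, one_div_mul_eq_div, div_lt_div_iff₀ (Real.sqrt_pos.mpr hD) hτ,
      ← Real.sqrt_mul hu]
    rw [Real.lt_sqrt hYτ.le]
    constructor
    · intro h
      have h2 : (Ymax * τ) ^ 2 * (R * Ymax) < (1 / (R * Ymax) - 1) * (C ^ 2 - (Ymax * τ) ^ 2) * (R * Ymax) := by
        exact mul_lt_mul_of_pos_right h hRY0
      have h3 : (1 / (R * Ymax) - 1) * (R * Ymax) = 1 - R * Ymax := by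
        field_simp
      nlinarith
    · intro h
      have h3 : (1 / (R * Ymax) - 1) * (C ^ 2 - (Ymax * τ) ^ 2) * (R * Ymax)
          = (1 - R * Ymax) * (C ^ 2 - (Ymax * τ) ^ 2) := by
        field_simp
      nlinarith [mul_pos hRY0 hD]
  have key2 : (C > Ymax * τ / Real.sqrt (1 - R * Ymax) ↔
      (Ymax * τ) ^ 2 < (1 - R * Ymax) * C ^ 2) := by
    rw [gt_iff_lt, div_lt_iff₀ (Real.sqrt_pos.mpr hs)]
    constructor
    · intro h
      have := Real.sq_sqrt hs.le
      nlinarith [Real.sqrt_pos.mpr hs]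
    · intro h
      nlinarith [Real.sq_sqrt hs.le, Real.sqrt_pos.mpr hs, mul_pos hC (Real.sqrt_pos.mpr hs)]
  have key3 : (R < (C ^ 2 - (Ymax * τ) ^ 2) / (Ymax * C ^ 2) ↔
      (Ymax * τ) ^ 2 < (1 - R * Ymax) * C ^ 2) := by
    rw [lt_div_iff₀ (by positivity)]
    constructor <;> intro h <;> nlinarith
  exact ⟨key1.trans key2.symm, key2.trans key3.symm⟩
end

section
/- Let R > 0, τ > 0, C > 0, and Y_max > 0 be real numbers with R·Y_max < 1 and C > Y_max·τ/√(1 − R·Y_max). Then for every real ω ≥ 0, at least one of the following holds: 1/(R·(1 + (ωτ)²)) > Y_max, or ωC/√(1 + (ωτ)²) > Y_max. That is, at every frequency either the inductive path or the (maximally negatively augmented) capacitive path has Augmented Conductance exceeding the load admittance bound. -/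
/-- If `R·Y_max < 1` and `C > Y_max τ/√(1 − R Y_max)`, then at every frequency
`ω ≥ 0` either the inductive path or the maximally negatively augmented capacitive
path has Augmented Conductance exceeding the load admittance bound `Y_max`. -/
theorem stmt_15 (R τ C Ymax : ℝ) (hR : 0 < R) (hτ : 0 < τ) (hC : 0 < C)
    (hY : 0 < Ymax) (hRY : R * Ymax < 1)
    (hCbound : C > Ymax * τ / Real.sqrt (1 - R * Ymax)) :
    ∀ ω : ℝ, 0 ≤ ω →
      1 / (R * (1 + (ω * τ) ^ 2)) > Ymax ∨
      ω * C / Real.sqrt (1 + (ω * τ) ^ 2) > Ymax := by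
  intro ω hω
  set x := ω * τ with hxdef
  by_cases h : 1 / (R * (1 + x ^ 2)) > Ymax
  · exact Or.inl h
  · right
    push_neg at h
    have hs2 : 0 < 1 - R * Ymax := by linarith
    set s := Real.sqrt (1 - R * Ymax) with hs
    have hs0 : 0 < s := Real.sqrt_pos.mpr hs2
    have hssq : s ^ 2 = 1 - R * Ymax := Real.sq_sqrt hs2.le
    have hden : 0 < 1 + x ^ 2 := by positivity
    have h1 : 1 ≤ R * Ymax * (1 + x ^ 2) := by
      have := (div_le_iff₀ (by positivity : (0:ℝ) < R * (1 + x ^ 2))).mp h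
      nlinarith
    have hx2 : s ^ 2 ≤ R * Ymax * x ^ 2 := by nlinarith
    have hxpos : 0 < x := by
      rcases lt_or_eq_of_le (mul_nonneg hω hτ.le) with h' | h'
      · exact h'
      · exfalso; nlinarith
    have hCs : Ymax * τ < C * s := by
      have := (div_lt_iff₀ hs0).mp hCbound
      linarith
    set t := Real.sqrt (1 + x ^ 2) with ht
    have ht0 : 0 < t := Real.sqrt_pos.mpr hden
    have htsq : t ^ 2 = 1 + x ^ 2 := Real.sq_sqrt hden.le
    have hts : t * s ≤ x := by
      have h2 : (t * s) ^ 2 ≤ x ^ 2 := by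
        rw [mul_pow, htsq, hssq]; nlinarith
      have h3 := Real.sqrt_le_sqrt h2
      rwa [Real.sqrt_sq (by positivity), Real.sqrt_sq hxpos.le] at h3
    rw [gt_iff_lt, lt_div_iff₀ ht0]
    have hωx : ω * C * τ = x * C := by rw [hxdef]; ring
    have : Ymax * τ * t < C * x := by
      calc Ymax * τ * t < C * s * t := by nlinarith
        _ = C * (t * s) := by ring
        _ ≤ C * x := by nlinarith
    nlinarith
end
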